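/- Let p and q be probability density functions on ℝ with common support R, suppose the differential Shannon cross-entropy h(p;q) is finite, and suppose E_{A∼p}[1/q(A)] = ∫_R p/q dμ < ∞. Then lim_{α ↑ 1} h_α(p;q) = h(p;q), i.e., the differential Rényi cross-entropy of order α converges to the differential Shannon cross-entropy as α tends to 1 from below. -/

import Mathlib

/-!
Write `t = α - 1` and `F t = ∫_R p q^t`, so that `F 0 = 1` and `h_α(p;q) = -log (F t) / t`.
The Rényi cross-entropy is therefore minus a difference quotient of `log ∘ F` at `0`, and its limit
as `t ↑ 0` is `-F'(0⁻) = -∫_R p log q`. The left derivative is computed by dominated convergence: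
for `-1 ≤ t < 0` the quotient `(q^t - 1) / t` lies between `1 - 1/q` (Bernoulli's inequality) and
`log q`, so `p (q^t - 1) / t` is dominated by the integrable `|p log q| + p + p / q`.
-/

open MeasureTheory Filter Topology Set Real

namespace Real

lemma one_sub_inv_le_rpow_sub_one_div {c t : ℝ} (hc : 0 < c) (ht₁ : -1 ≤ t) (ht₀ : t < 0) :
    1 - c⁻¹ ≤ (c ^ t - 1) / t := by
  rw [le_div_iff_of_neg ht₀]
  have hbernoulli := rpow_one_add_le_one_add_mul_self (s := c⁻¹ - 1)
    (by linarith [inv_pos.2 hc]) (p := -t) (by linarith) (by linarith)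
  rw [add_sub_cancel, inv_rpow hc.le, rpow_neg hc.le, inv_inv] at hbernoulli
  linarith

lemma rpow_sub_one_div_le_log {c t : ℝ} (hc : 0 < c) (ht : t < 0) :
    (c ^ t - 1) / t ≤ log c := by
  rw [div_le_iff_of_neg ht, rpow_def_of_pos hc]
  linarith [add_one_le_exp (log c * t)]

lemma tendsto_rpow_sub_one_div_nhdsLT {c : ℝ} (hc : 0 < c) :
    Tendsto (fun t => (c ^ t - 1) / t) (𝓝[<] 0) (𝓝 (log c)) := by
  simpa [div_eq_inv_mul] using (hasStrictDerivAt_const_rpow hc 0).hasDerivAt.tendsto_slope_zero_left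

end Real

lemma abs_mul_rpow_sub_one_div_le {a c t : ℝ} (ha : 0 ≤ a) (hc : 0 < c) (ht₁ : -1 ≤ t)
    (ht₀ : t < 0) : |a * ((c ^ t - 1) / t)| ≤ |a * log c| + a + a / c := by
  have hupper := mul_le_mul_of_nonneg_left (rpow_sub_one_div_le_log hc ht₀) ha
  have hlower := mul_le_mul_of_nonneg_left (one_sub_inv_le_rpow_sub_one_div hc ht₁ ht₀) ha
  have : 0 ≤ a / c := div_nonneg ha hc.le
  rw [mul_sub, mul_one, ← div_eq_mul_inv] at hlower
  rw [abs_le]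
  constructor <;> linarith [le_abs_self (a * log c), abs_nonneg (a * log c)]

section

variable {α : Type*} [MeasurableSpace α] {μ : Measure α} {p q : α → ℝ}

lemma integrable_mul_rpow_sub_one_div (hq : AEMeasurable q μ)
    (hp0 : 0 ≤ᵐ[μ] p) (hq0 : ∀ᵐ x ∂μ, 0 < q x) (hp_int : Integrable p μ)
    (hlog : Integrable (fun x => p x * log (q x)) μ) (hinv : Integrable (fun x => p x / q x) μ)
    {t : ℝ} (ht₁ : -1 ≤ t) (ht₀ : t < 0) :
    Integrable (fun x => p x * ((q x ^ t - 1) / t)) μ := by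
  refine (hlog.abs.add hp_int |>.add hinv).mono'
    (hp_int.aestronglyMeasurable.mul
      ((hq.pow_const t).sub_const 1 |>.div_const t).aestronglyMeasurable) ?_
  filter_upwards [hp0, hq0] with x hpx hqx
  exact abs_mul_rpow_sub_one_div_le hpx hqx ht₁ ht₀

theorem tendsto_integral_mul_rpow_sub_one_div (hq : AEMeasurable q μ)
    (hp0 : 0 ≤ᵐ[μ] p) (hq0 : ∀ᵐ x ∂μ, 0 < q x) (hp_int : Integrable p μ)
    (hlog : Integrable (fun x => p x * log (q x)) μ) (hinv : Integrable (fun x => p x / q x) μ) :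
    Tendsto (fun t => ∫ x, p x * ((q x ^ t - 1) / t) ∂μ) (𝓝[<] 0)
      (𝓝 (∫ x, p x * log (q x) ∂μ)) := by
  have hnear : ∀ᶠ t in 𝓝[<] (0 : ℝ), t ∈ Ioo (-1) 0 := Ioo_mem_nhdsLT (by norm_num)
  refine tendsto_integral_filter_of_dominated_convergence _ ?_ ?_
    (hlog.abs.add hp_int |>.add hinv) ?_
  · exact Eventually.of_forall fun t =>
      hp_int.aestronglyMeasurable.mul
        ((hq.pow_const t).sub_const 1 |>.div_const t).aestronglyMeasurable
  · filter_upwards [hnear] with t ht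
    filter_upwards [hp0, hq0] with x hpx hqx
    exact abs_mul_rpow_sub_one_div_le hpx hqx ht.1.le ht.2
  · filter_upwards [hq0] with x hqx
    exact (tendsto_rpow_sub_one_div_nhdsLT hqx).const_mul (p x)

theorem hasDerivWithinAt_integral_mul_rpow (hq : AEMeasurable q μ)
    (hp0 : 0 ≤ᵐ[μ] p) (hq0 : ∀ᵐ x ∂μ, 0 < q x) (hp_int : Integrable p μ)
    (hlog : Integrable (fun x => p x * log (q x)) μ) (hinv : Integrable (fun x => p x / q x) μ) :
    HasDerivWithinAt (fun t : ℝ => ∫ x, p x * q x ^ t ∂μ) (∫ x, p x * log (q x) ∂μ) (Iio 0) 0 := by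
  rw [hasDerivWithinAt_iff_tendsto_slope' self_notMem_Iio]
  refine (tendsto_integral_mul_rpow_sub_one_div hq hp0 hq0 hp_int hlog hinv).congr' ?_
  filter_upwards [Ioo_mem_nhdsLT (show (-1 : ℝ) < 0 by norm_num)] with t ht
  have hdecomp : (fun x => p x * q x ^ t) = fun x => p x + t * (p x * ((q x ^ t - 1) / t)) := by
    funext x
    field_simp [ht.2.ne]
    ring
  rw [slope_def_field, hdecomp, integral_add hp_int
    ((integrable_mul_rpow_sub_one_div hq hp0 hq0 hp_int hlog hinv ht.1.le ht.2).const_mul t),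
    integral_const_mul]
  simp only [rpow_zero, mul_one]
  field_simp [ht.2.ne]
  ring

end

theorem tendsto_renyi_of_hasDerivWithinAt {F : ℝ → ℝ} {L : ℝ}
    (hF : HasDerivWithinAt F L (Iio 0) 0) (hF0 : F 0 = 1) :
    Tendsto (fun α : ℝ => 1 / (1 - α) * log (F (α - 1))) (𝓝[<] 1) (𝓝 (-L)) := by
  have hlogF := hF.log (by simp [hF0])
  rw [hF0, div_one, hasDerivWithinAt_iff_tendsto_slope' self_notMem_Iio] at hlogF
  have hshift : Tendsto (fun α : ℝ => α - 1) (𝓝[<] 1) (𝓝[<] 0) := by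
    refine tendsto_nhdsWithin_iff.2 ⟨?_, ?_⟩
    · simpa using (continuous_sub_right (1 : ℝ)).continuousWithinAt.tendsto (s := Iio 1) (x := 1)
    · filter_upwards [self_mem_nhdsWithin] with α hα
      exact sub_neg.2 (mem_Iio.1 hα)
  refine (hlogF.neg.comp hshift).congr fun α => ?_
  simp only [Function.comp, slope_def_field, hF0, log_one, sub_zero]
  rw [← neg_sub 1 α, div_neg, neg_neg, div_eq_inv_mul, one_div]

theorem stmt_2_general
    (p q : ℝ → ℝ) (R : Set ℝ) (hR : MeasurableSet R)
    (hq_meas : Measurable q)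
    (hp_nonneg : ∀ x, 0 ≤ p x)
    (hq_pos : ∀ x ∈ R, 0 < q x)
    (hp_int : IntegrableOn p R)
    (hp_one : ∫ x in R, p x = 1)
    (h_fin : IntegrableOn (fun x => p x * Real.log (q x)) R)
    (h_inv : IntegrableOn (fun x => p x / q x) R) :
    Tendsto (fun α : ℝ => (1 / (1 - α)) * Real.log (∫ x in R, p x * q x ^ (α - 1)))
      (𝓝[<] 1) (𝓝 (-∫ x in R, p x * Real.log (q x))) := by
  refine tendsto_renyi_of_hasDerivWithinAt (F := fun t => ∫ x in R, p x * q x ^ t) ?_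
    (by simpa using hp_one)
  exact hasDerivWithinAt_integral_mul_rpow hq_meas.aemeasurable (ae_of_all _ hp_nonneg)
    (ae_restrict_of_forall_mem hR hq_pos) hp_int h_fin h_inv

/-- Let `p` and `q` be probability density functions on `ℝ` with common support `R`.
If the differential Shannon cross-entropy `h(p;q) = -∫_R p log q` is finite
(i.e., the integrand is integrable) and `E_{A∼p}[1/q(A)] = ∫_R p/q dμ < ∞`
(i.e., `p/q` is integrable on `R`), then the differential Rényi cross-entropy
`h_α(p;q) = (1/(1-α)) log ∫_R p q^(α-1)` satisfies `h_α(p;q) → h(p;q)` as `α ↑ 1`. -/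
theorem stmt_2
    (p q : ℝ → ℝ) (R : Set ℝ) (hR : MeasurableSet R)
    (hp_meas : Measurable p) (hq_meas : Measurable q)
    (hp_nonneg : ∀ x, 0 ≤ p x) (hq_nonneg : ∀ x, 0 ≤ q x)
    (hp_pos : ∀ x ∈ R, 0 < p x) (hq_pos : ∀ x ∈ R, 0 < q x)
    (hp_int : IntegrableOn p R) (hq_int : IntegrableOn q R)
    (hp_one : ∫ x in R, p x = 1) (hq_one : ∫ x in R, q x = 1)
    (h_fin : IntegrableOn (fun x => p x * Real.log (q x)) R)
    (h_inv : IntegrableOn (fun x => p x / q x) R) :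
    Tendsto (fun α : ℝ => (1 / (1 - α)) * Real.log (∫ x in R, p x * q x ^ (α - 1)))
      (𝓝[<] 1) (𝓝 (-∫ x in R, p x * Real.log (q x))) :=
  stmt_2_general p q R hR hq_meas hp_nonneg hq_pos hp_int hp_one h_fin h_inv
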